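/- (Theorem 5.12, characterization of unitary operators: equivalence of (U3) and (U6).) For a continuous K-linear operator U : H →L[K] H the following are equivalent: (a) there exists V : H →L[K] H such that ⟪x, U y⟫ = ⟪V x, y⟫ for all x, y (V is the adjoint of U), V (U x) = x and U (V x) = x for all x (V = U⁻¹), and ‖U‖ = 1; (b) U is surjective, isometric (‖U x‖ = ‖x‖ for all x), and inner-product-preserving (⟪U x, U y⟫ = ⟪x, y⟫ for all x, y), i.e. U is an automorphism of the p-adic Hilbert space H. -/

import Mathlib

open Filter

noncomputable section

variable (K : Type*) [NontriviallyNormedField K] [IsUltrametricDist K]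
  [CompleteSpace K] [StarRing K] [NormedStarGroup K]

/-- The p-adic coordinate Hilbert space: zero-convergent sequences in `K` with sup norm. -/
abbrev H := ZeroAtInftyContinuousMap ℕ K

/-- The standard basis vectors of `H K`. -/
def e (n : ℕ) : H K where
  toFun := fun m => if m = n then 1 else 0
  continuous_toFun := continuous_of_discreteTopology
  zero_at_infty' := by
    rw [cocompact_eq_atTop (α := ℕ)]
    refine Filter.Tendsto.congr' ?_ tendsto_const_nhds
    filter_upwards [Filter.eventually_gt_atTop n] with m hm
    simp [Nat.ne_of_gt hm]

/-- The canonical inner product on `H K`: `⟪x, y⟫ = ∑' i, star (x i) * y i`. -/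
def inner' (x y : H K) : K := ∑' i, star (x i) * y i

/-- A bounded operator is of trace class if its matrix entries vanish along the
cofinite filter of `ℕ × ℕ`. -/
def IsTraceClass (T : H K →L[K] H K) : Prop :=
  Tendsto (fun q : ℕ × ℕ => (T (e K q.2)) q.1) Filter.cofinite (nhds 0)

/-!
The two conditions share the identity `⟪U x, U y⟫ = ⟪x, y⟫`. Given an adjoint inverse `V`,
it follows from `⟪U x, U y⟫ = ⟪V (U x), y⟫`; the norm is then recovered coordinatewise,
`‖x n‖ = ‖⟪U (e n), U x⟫‖ ≤ ‖U (e n)‖ ‖U x‖ ≤ ‖U x‖`, using `‖U‖ = 1` and the ultrametric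
Cauchy–Schwarz bound `‖⟪x, y⟫‖ ≤ ‖x‖ ‖y‖`. Conversely a surjective isometry is a linear
isometry equivalence, whose inverse is the adjoint because `⟪x, U y⟫ = ⟪U (V x), U y⟫`.
-/

namespace ZeroAtInftyContinuousMap

open scoped ZeroAtInfty

variable {α β : Type*} [TopologicalSpace α] [SeminormedAddCommGroup β]

theorem norm_coe_le_norm (f : C₀(α, β)) (a : α) : ‖f a‖ ≤ ‖f‖ :=
  norm_toBCF_eq_norm (f := f) ▸ f.toBCF.norm_coe_le_norm a

theorem norm_le {f : C₀(α, β)} {C : ℝ} (hC : 0 ≤ C) : ‖f‖ ≤ C ↔ ∀ a, ‖f a‖ ≤ C :=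
  norm_toBCF_eq_norm (f := f) ▸ BoundedContinuousFunction.norm_le hC

end ZeroAtInftyContinuousMap

section

variable {𝕜 : Type*} [NontriviallyNormedField 𝕜]

theorem norm_e (n : ℕ) : ‖e 𝕜 n‖ = 1 := by
  refine le_antisymm ((ZeroAtInftyContinuousMap.norm_le zero_le_one).2 fun m => ?_) ?_
  · by_cases h : m = n <;> simp [e, h]
  · simpa [e] using (e 𝕜 n).norm_coe_le_norm n

instance : Nontrivial (H 𝕜) :=
  ⟨⟨e 𝕜 0, 0, fun h => by simpa [h] using norm_e (𝕜 := 𝕜) 0⟩⟩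

variable [StarRing 𝕜]

theorem inner'_e_left (n : ℕ) (x : H 𝕜) : inner' 𝕜 (e 𝕜 n) x = x n := by
  rw [inner', tsum_eq_single n fun m hm => by simp [e, hm]]
  simp [e]

variable [IsUltrametricDist 𝕜] [NormedStarGroup 𝕜]

theorem norm_inner'_le (x y : H 𝕜) : ‖inner' 𝕜 x y‖ ≤ ‖x‖ * ‖y‖ :=
  IsUltrametricDist.norm_tsum_le_of_forall_le_of_nonneg (by positivity) fun i => by
    rw [norm_mul, norm_star]
    exact mul_le_mul (x.norm_coe_le_norm i) (y.norm_coe_le_norm i) (norm_nonneg _)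
      (norm_nonneg _)

theorem norm_map_eq_of_inner'_map_map {T : H 𝕜 →L[𝕜] H 𝕜}
    (hT : ∀ x y, inner' 𝕜 (T x) (T y) = inner' 𝕜 x y) (hT₁ : ‖T‖ ≤ 1) (x : H 𝕜) :
    ‖T x‖ = ‖x‖ := by
  have hT_le (x : H 𝕜) : ‖T x‖ ≤ ‖x‖ := by simpa using T.le_of_opNorm_le hT₁ x
  refine le_antisymm (hT_le x) ((ZeroAtInftyContinuousMap.norm_le (norm_nonneg _)).2 fun n => ?_)
  calc ‖x n‖ = ‖inner' 𝕜 (T (e 𝕜 n)) (T x)‖ := by rw [hT, inner'_e_left]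
    _ ≤ ‖T (e 𝕜 n)‖ * ‖T x‖ := norm_inner'_le _ _
    _ ≤ 1 * ‖T x‖ := by
        gcongr
        simpa [norm_e] using hT_le (e 𝕜 n)
    _ = ‖T x‖ := one_mul _

end

/-- Characterization of unitary operators: `U` is adjointable with `U* = U⁻¹` and
`‖U‖ = 1` iff `U` is a surjective isometric inner-product-preserving operator. -/
theorem stmt7 (U : H K →L[K] H K) :
    (∃ V : H K →L[K] H K, (∀ x y : H K, inner' K x (U y) = inner' K (V x) y) ∧
      (∀ x : H K, V (U x) = x) ∧ (∀ x : H K, U (V x) = x) ∧ ‖U‖ = 1) ↔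
    (Function.Surjective U ∧ (∀ x : H K, ‖U x‖ = ‖x‖) ∧
      ∀ x y : H K, inner' K (U x) (U y) = inner' K x y) := by
  constructor
  · rintro ⟨V, hadj, hVU, hUV, hnorm⟩
    have hinner (x y : H K) : inner' K (U x) (U y) = inner' K x y := by rw [hadj, hVU]
    exact ⟨fun y => ⟨V y, hUV y⟩, norm_map_eq_of_inner'_map_map hinner hnorm.le, hinner⟩
  · rintro ⟨hsurj, hiso, hinner⟩
    let Uᵢ : H K →ₗᵢ[K] H K := ⟨U.toLinearMap, hiso⟩
    let L := LinearIsometryEquiv.ofSurjective Uᵢ hsurj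
    let V : H K →L[K] H K := L.symm.toContinuousLinearEquiv
    have hUV (x : H K) : U (V x) = x := L.apply_symm_apply x
    refine ⟨V, fun x y => ?_, L.symm_apply_apply, hUV, Uᵢ.norm_toContinuousLinearMap⟩
    rw [← hinner (V x) y, hUV]

end
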